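/- For all natural numbers N ≥ 1, all natural numbers m with 2 ≤ m ≤ N − 1, and all natural numbers n with 0 ≤ n ≤ N − 1, the Shmaliy polynomials satisfy the three-term recurrence h_m(n,N) = 2·[m²(2N−1) − (4m²−1)n]/(m(2m−1)(N+m)) · h_{m−1}(n,N) − (2m+1)(N−m)/((2m−1)(N+m)) · h_{m−2}(n,N); moreover h_0(n,N) = 1/N, and the same recurrence holds for m = 1 with the convention h_{−1}(n,N) = 0. -/
import Mathlib


/-- The Pochhammer symbol `(a)_k = a (a+1) ⋯ (a+k-1)` over ℚ. -/
noncomputable def poch (a : ℚ) (k : ℕ) : ℚ := (ascPochhammer ℚ k).eval a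

/-- The Shmaliy polynomial `h_m(n,N)`. -/
noncomputable def shmaliy (m n N : ℕ) : ℚ :=
  (((m : ℚ) + 1) ^ 2 / N) *
    ∑ k ∈ Finset.range (m + 1),
      (poch (-(m : ℚ)) k * poch ((n : ℚ) + 1) k * poch ((m : ℚ) + 2) k) /
        (poch 2 k * poch ((N : ℚ) + 1) k * (k.factorial : ℚ))

lemma poch_zero (a : ℚ) : poch a 0 = 1 := by simp [poch]

lemma poch_succ (a : ℚ) (k : ℕ) : poch a (k + 1) = poch a k * (a + k) := by
  simp [poch, ascPochhammer_succ_eval]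

lemma poch_succ_left (a : ℚ) (k : ℕ) : poch a (k + 1) = a * poch (a + 1) k := by
  simp [poch, ascPochhammer_succ_left, Polynomial.eval_comp]

lemma poch_shift (a : ℚ) (k : ℕ) : a * poch (a + 1) k = poch a k * (a + k) := by
  have h1 := poch_succ a k
  have h2 := poch_succ_left a k
  linarith

lemma poch_two_pos (k : ℕ) : 0 < poch 2 k := ascPochhammer_pos k 2 (by norm_num)

lemma poch_cast_pos (N k : ℕ) : 0 < poch ((N:ℚ)+1) k := ascPochhammer_pos k _ (by positivity)

lemma poch_neg_nat (m k : ℕ) (h : m < k) : poch (-(m:ℚ)) k = 0 := by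
  induction k with
  | zero => omega
  | succ k ih =>
    rw [poch_succ]
    by_cases h2 : m < k
    · rw [ih h2, zero_mul]
    · have hmk : m = k := by omega
      subst hmk; simp

noncomputable def coef (N m k : ℕ) : ℚ :=
  (((m : ℚ) + 1) ^ 2 / N) *
    ((poch (-(m : ℚ)) k * poch ((m : ℚ) + 2) k) /
      (poch 2 k * poch ((N : ℚ) + 1) k * (k.factorial : ℚ)))

noncomputable def Cc (N m : ℕ) : ℚ :=
  2 * (m:ℚ)^2 * (2*(N:ℚ)-1) / ((m:ℚ) * (2*(m:ℚ)-1) * ((N:ℚ)+(m:ℚ)))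
noncomputable def Dc (N m : ℕ) : ℚ :=
  -2 * (4*(m:ℚ)^2-1) / ((m:ℚ) * (2*(m:ℚ)-1) * ((N:ℚ)+(m:ℚ)))
noncomputable def Bc (N m : ℕ) : ℚ :=
  (2*(m:ℚ)+1) * ((N:ℚ)-(m:ℚ)) / ((2*(m:ℚ)-1) * ((N:ℚ)+(m:ℚ)))

set_option maxHeartbeats 1600000 in
lemma key_succ (N m k : ℕ) (hN : 1 ≤ N) (hm : 2 ≤ m) :
    coef N m (k+1) =
      (Cc N m - Dc N m * ((k:ℚ)+1+1)) * coef N (m-1) (k+1)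
        - Bc N m * coef N (m-2) (k+1) + Dc N m * coef N (m-1) k := by
  obtain ⟨j, rfl⟩ : ∃ j, m = j + 2 := ⟨m - 2, by omega⟩
  have e1 : j + 2 - 1 = j + 1 := by omega
  have e2 : j + 2 - 2 = j := by omega
  rw [e1, e2]
  have hj0 : (0:ℚ) ≤ (j:ℚ) := Nat.cast_nonneg j
  have hk0 : (0:ℚ) ≤ (k:ℚ) := Nat.cast_nonneg k
  have hj1 : (j:ℚ) + 1 ≠ 0 := by positivity
  have hj2 : (j:ℚ) + 2 ≠ 0 := by positivity
  have hj3 : (j:ℚ) + 3 ≠ 0 := by positivity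
  have hjk3 : (j:ℚ) + (k:ℚ) + 3 ≠ 0 := by positivity
  have hjk4 : (j:ℚ) + (k:ℚ) + 4 ≠ 0 := by positivity
  have hk1 : (k:ℚ) + 1 ≠ 0 := by positivity
  have hk2 : (2:ℚ) + (k:ℚ) ≠ 0 := by positivity
  have hNq : (N:ℚ) ≠ 0 := by
    have : (0:ℚ) < N := by exact_mod_cast hN
    positivity
  have hNk : (N:ℚ) + 1 + (k:ℚ) ≠ 0 := by positivity
  have hQ : poch 2 k ≠ 0 := (poch_two_pos k).ne'
  have hR : poch ((N:ℚ)+1) k ≠ 0 := (poch_cast_pos N k).ne'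
  have hK : (k.factorial : ℚ) ≠ 0 := by exact_mod_cast k.factorial_ne_zero
  have h2m : 2*((j:ℚ)+2)-1 ≠ 0 := by
    intro h; nlinarith [h]
  have hNm : (N:ℚ) + ((j:ℚ)+2) ≠ 0 := by positivity
  -- contiguous relations (multiplied forms)
  have base1 := poch_shift (-((j:ℚ)+2)) (k+1)
  rw [show (-((j:ℚ)+2) + 1) = -((j:ℚ)+1) from by ring] at base1
  push_cast at base1
  have M1 : poch (-((j:ℚ)+1)) (k+1) * ((j:ℚ)+2)
      = poch (-((j:ℚ)+2)) (k+1) * ((j:ℚ)+1-(k:ℚ)) := by linear_combination -base1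
  have base2 := poch_shift (-((j:ℚ)+1)) (k+1)
  rw [show (-((j:ℚ)+1) + 1) = -((j:ℚ)) from by ring] at base2
  push_cast at base2
  have M2 : poch (-((j:ℚ))) (k+1) * (((j:ℚ)+2)*((j:ℚ)+1))
      = poch (-((j:ℚ)+2)) (k+1) * (((j:ℚ)+1-(k:ℚ))*((j:ℚ)-(k:ℚ))) := by
    linear_combination (-((j:ℚ)+2)) * base2 + ((j:ℚ)-(k:ℚ)) * M1
  have base3 := poch_shift ((j:ℚ)+1+2) (k+1)
  rw [show ((j:ℚ)+1+2+1) = ((j:ℚ)+2+2) from by ring] at base3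
  push_cast at base3
  have M3 : poch ((j:ℚ)+1+2) (k+1) * ((j:ℚ)+(k:ℚ)+4)
      = ((j:ℚ)+3) * poch ((j:ℚ)+2+2) (k+1) := by linear_combination -base3
  have base4 := poch_shift ((j:ℚ)+2) (k+1)
  rw [show ((j:ℚ)+2+1) = ((j:ℚ)+1+2) from by ring] at base4
  push_cast at base4
  have M4 : poch ((j:ℚ)+2) (k+1) * (((j:ℚ)+(k:ℚ)+3)*((j:ℚ)+(k:ℚ)+4))
      = ((j:ℚ)+2)*((j:ℚ)+3) * poch ((j:ℚ)+2+2) (k+1) := by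
    linear_combination (-((j:ℚ)+(k:ℚ)+4)) * base4 + ((j:ℚ)+2) * M3
  have base5 := poch_succ_left (-((j:ℚ)+2)) k
  rw [show (-((j:ℚ)+2) + 1) = -((j:ℚ)+1) from by ring] at base5
  have M5 : poch (-((j:ℚ)+1)) k * ((j:ℚ)+2) = -poch (-((j:ℚ)+2)) (k+1) := by
    linear_combination base5
  have base6 := poch_succ ((j:ℚ)+1+2) k
  push_cast at base6
  have M6 : poch ((j:ℚ)+1+2) k * (((j:ℚ)+(k:ℚ)+3)*((j:ℚ)+(k:ℚ)+4))
      = ((j:ℚ)+3) * poch ((j:ℚ)+2+2) (k+1) := by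
    linear_combination (-((j:ℚ)+(k:ℚ)+4)) * base6 + M3
  -- division forms
  have hp21 : ((j:ℚ)+2)*((j:ℚ)+1) ≠ 0 := mul_ne_zero hj2 hj1
  have hp34 : ((j:ℚ)+(k:ℚ)+3)*((j:ℚ)+(k:ℚ)+4) ≠ 0 := mul_ne_zero hjk3 hjk4
  have D1 : poch (-((j:ℚ)+1)) (k+1)
      = poch (-((j:ℚ)+2)) (k+1) * ((j:ℚ)+1-(k:ℚ)) / ((j:ℚ)+2) := by
    rw [eq_div_iff hj2]; linear_combination M1
  have D2 : poch (-((j:ℚ))) (k+1)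
      = poch (-((j:ℚ)+2)) (k+1) * (((j:ℚ)+1-(k:ℚ))*((j:ℚ)-(k:ℚ))) / (((j:ℚ)+2)*((j:ℚ)+1)) := by
    rw [eq_div_iff hp21]; linear_combination M2
  have D3 : poch ((j:ℚ)+1+2) (k+1)
      = ((j:ℚ)+3) * poch ((j:ℚ)+2+2) (k+1) / ((j:ℚ)+(k:ℚ)+4) := by
    rw [eq_div_iff hjk4]; linear_combination M3
  have D4 : poch ((j:ℚ)+2) (k+1)
      = ((j:ℚ)+2)*((j:ℚ)+3) * poch ((j:ℚ)+2+2) (k+1) / (((j:ℚ)+(k:ℚ)+3)*((j:ℚ)+(k:ℚ)+4)) := by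
    rw [eq_div_iff hp34]; linear_combination M4
  have D5 : poch (-((j:ℚ)+1)) k = -poch (-((j:ℚ)+2)) (k+1) / ((j:ℚ)+2) := by
    rw [eq_div_iff hj2]; linear_combination M5
  have D6 : poch ((j:ℚ)+1+2) k
      = ((j:ℚ)+3) * poch ((j:ℚ)+2+2) (k+1) / (((j:ℚ)+(k:ℚ)+3)*((j:ℚ)+(k:ℚ)+4)) := by
    rw [eq_div_iff hp34]; linear_combination M6
  have hZ : ((N:ℚ)*((2+(k:ℚ))*((N:ℚ)+1+(k:ℚ))*((k:ℚ)+1))*((j:ℚ)+1)*((j:ℚ)+2)*((j:ℚ)+(k:ℚ)+3)*((j:ℚ)+(k:ℚ)+4)) ≠ 0 := by positivity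
  have hW : (((j:ℚ)+2)*(2*((j:ℚ)+2)-1)*((N:ℚ)+((j:ℚ)+2))) ≠ 0 := mul_ne_zero (mul_ne_zero hj2 h2m) hNm
  have hWB : (2*((j:ℚ)+2)-1)*((N:ℚ)+((j:ℚ)+2)) ≠ 0 := mul_ne_zero h2m hNm
  have E0 : coef N (j+2) (k+1) = ((((j:ℚ)+3)^2*((j:ℚ)+2)*((j:ℚ)+1)*((j:ℚ)+(k:ℚ)+3)*((j:ℚ)+(k:ℚ)+4)) / ((N:ℚ)*((2+(k:ℚ))*((N:ℚ)+1+(k:ℚ))*((k:ℚ)+1))*((j:ℚ)+1)*((j:ℚ)+2)*((j:ℚ)+(k:ℚ)+3)*((j:ℚ)+(k:ℚ)+4))) * (poch (-((j:ℚ)+2)) (k+1) * poch ((j:ℚ)+2+2) (k+1) / (poch 2 k * poch ((N:ℚ)+1) k * (k.factorial : ℚ))) := by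
    simp only [coef, Nat.factorial_succ]
    push_cast
    rw [poch_succ 2 k, poch_succ ((N:ℚ)+1) k]
    field_simp
    ring
  have E1 : coef N (j+1) (k+1) = ((((j:ℚ)+2)^2*((j:ℚ)+1-(k:ℚ))*((j:ℚ)+3)*((j:ℚ)+1)*((j:ℚ)+(k:ℚ)+3)) / ((N:ℚ)*((2+(k:ℚ))*((N:ℚ)+1+(k:ℚ))*((k:ℚ)+1))*((j:ℚ)+1)*((j:ℚ)+2)*((j:ℚ)+(k:ℚ)+3)*((j:ℚ)+(k:ℚ)+4))) * (poch (-((j:ℚ)+2)) (k+1) * poch ((j:ℚ)+2+2) (k+1) / (poch 2 k * poch ((N:ℚ)+1) k * (k.factorial : ℚ))) := by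
    simp only [coef, Nat.factorial_succ]
    push_cast
    rw [D1, D3, poch_succ 2 k, poch_succ ((N:ℚ)+1) k]
    field_simp
    ring
  have E2 : coef N j (k+1) = ((((j:ℚ)+1)^2*((j:ℚ)+1-(k:ℚ))*((j:ℚ)-(k:ℚ))*((j:ℚ)+2)*((j:ℚ)+3)) / ((N:ℚ)*((2+(k:ℚ))*((N:ℚ)+1+(k:ℚ))*((k:ℚ)+1))*((j:ℚ)+1)*((j:ℚ)+2)*((j:ℚ)+(k:ℚ)+3)*((j:ℚ)+(k:ℚ)+4))) * (poch (-((j:ℚ)+2)) (k+1) * poch ((j:ℚ)+2+2) (k+1) / (poch 2 k * poch ((N:ℚ)+1) k * (k.factorial : ℚ))) := by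
    simp only [coef, Nat.factorial_succ]
    push_cast
    rw [D2, D4, poch_succ 2 k, poch_succ ((N:ℚ)+1) k]
    field_simp
  have E3 : coef N (j+1) k = ((-(((j:ℚ)+2)^2*((j:ℚ)+3)*(2+(k:ℚ))*((N:ℚ)+1+(k:ℚ))*((k:ℚ)+1)*((j:ℚ)+1))) / ((N:ℚ)*((2+(k:ℚ))*((N:ℚ)+1+(k:ℚ))*((k:ℚ)+1))*((j:ℚ)+1)*((j:ℚ)+2)*((j:ℚ)+(k:ℚ)+3)*((j:ℚ)+(k:ℚ)+4))) * (poch (-((j:ℚ)+2)) (k+1) * poch ((j:ℚ)+2+2) (k+1) / (poch 2 k * poch ((N:ℚ)+1) k * (k.factorial : ℚ))) := by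
    simp only [coef]
    push_cast
    rw [D5, D6]
    field_simp
    ring
  rw [E0, E1, E2, E3]
  have hq1 : Cc N (j+2) - Dc N (j+2) * ((k:ℚ)+1+1) = (2*((j:ℚ)+2)^2*(2*(N:ℚ)-1) + 2*(4*((j:ℚ)+2)^2-1)*((k:ℚ)+1+1)) / (((j:ℚ)+2)*(2*((j:ℚ)+2)-1)*((N:ℚ)+((j:ℚ)+2))) := by
    simp only [Cc, Dc]; push_cast; ring
  have hq2 : Bc N (j+2) = (((j:ℚ)+2)*(2*((j:ℚ)+2)+1)*((N:ℚ)-((j:ℚ)+2))) / (((j:ℚ)+2)*(2*((j:ℚ)+2)-1)*((N:ℚ)+((j:ℚ)+2))) := by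
    simp only [Bc]; push_cast; rw [div_eq_div_iff hWB hW]; ring
  have hq3 : Dc N (j+2) = (-2*(4*((j:ℚ)+2)^2-1)) / (((j:ℚ)+2)*(2*((j:ℚ)+2)-1)*((N:ℚ)+((j:ℚ)+2))) := by
    simp only [Dc]; push_cast; ring
  rw [hq1, hq2, hq3]
  have hpoly : (2*((j:ℚ)+2)^2*(2*(N:ℚ)-1) + 2*(4*((j:ℚ)+2)^2-1)*((k:ℚ)+1+1)) * (((j:ℚ)+2)^2*((j:ℚ)+1-(k:ℚ))*((j:ℚ)+3)*((j:ℚ)+1)*((j:ℚ)+(k:ℚ)+3)) - (((j:ℚ)+2)*(2*((j:ℚ)+2)+1)*((N:ℚ)-((j:ℚ)+2))) * (((j:ℚ)+1)^2*((j:ℚ)+1-(k:ℚ))*((j:ℚ)-(k:ℚ))*((j:ℚ)+2)*((j:ℚ)+3)) + (-2*(4*((j:ℚ)+2)^2-1)) * (-(((j:ℚ)+2)^2*((j:ℚ)+3)*(2+(k:ℚ))*((N:ℚ)+1+(k:ℚ))*((k:ℚ)+1)*((j:ℚ)+1))) = (((j:ℚ)+2)*(2*((j:ℚ)+2)-1)*((N:ℚ)+((j:ℚ)+2)))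 * (((j:ℚ)+3)^2*((j:ℚ)+2)*((j:ℚ)+1)*((j:ℚ)+(k:ℚ)+3)*((j:ℚ)+(k:ℚ)+4)) := by ring
  have hfrac : (((2*((j:ℚ)+2)^2*(2*(N:ℚ)-1) + 2*(4*((j:ℚ)+2)^2-1)*((k:ℚ)+1+1)) * (((j:ℚ)+2)^2*((j:ℚ)+1-(k:ℚ))*((j:ℚ)+3)*((j:ℚ)+1)*((j:ℚ)+(k:ℚ)+3)) - (((j:ℚ)+2)*(2*((j:ℚ)+2)+1)*((N:ℚ)-((j:ℚ)+2))) * (((j:ℚ)+1)^2*((j:ℚ)+1-(k:ℚ))*((j:ℚ)-(k:ℚ))*((j:ℚ)+2)*((j:ℚ)+3)) + (-2*(4*((j:ℚ)+2)^2-1)) * (-(((j:ℚ)+2)^2*((j:ℚ)+3)*(2+(k:ℚ))*((N:ℚ)+1+(k:ℚ))*((k:ℚ)+1)*((j:ℚ)+1)))) / (((j:ℚ)+2)*(2*((j:ℚ)+2)-1)*((N:ℚ)+((j:ℚ)+2)))) / ((N:ℚ)*((2+(k:ℚ))*((N:ℚ)+1+(k:ℚ))*((k:ℚ)+1))*((j:ℚ)+1)*((j:ℚ)+2)*((j:ℚ)+(k:ℚ)+3)*((j:ℚ)+(k:ℚ)+4))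 = (((j:ℚ)+3)^2*((j:ℚ)+2)*((j:ℚ)+1)*((j:ℚ)+(k:ℚ)+3)*((j:ℚ)+(k:ℚ)+4)) / ((N:ℚ)*((2+(k:ℚ))*((N:ℚ)+1+(k:ℚ))*((k:ℚ)+1))*((j:ℚ)+1)*((j:ℚ)+2)*((j:ℚ)+(k:ℚ)+3)*((j:ℚ)+(k:ℚ)+4)) := by
    rw [hpoly, mul_div_cancel_left₀ _ hW]
  linear_combination (-1 : ℚ) * (poch (-((j:ℚ)+2)) (k+1) * poch ((j:ℚ)+2+2) (k+1) / (poch 2 k * poch ((N:ℚ)+1) k * (k.factorial : ℚ))) * hfrac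

set_option maxHeartbeats 800000 in
lemma key0 (N m : ℕ) (hN : 1 ≤ N) (hm : 2 ≤ m) :
    coef N m 0 = (Cc N m - Dc N m) * coef N (m-1) 0 - Bc N m * coef N (m-2) 0 := by
  obtain ⟨j, rfl⟩ : ∃ j, m = j + 2 := ⟨m - 2, by omega⟩
  have e1 : j + 2 - 1 = j + 1 := by omega
  have e2 : j + 2 - 2 = j := by omega
  rw [e1, e2]
  have hj0 : (0:ℚ) ≤ (j:ℚ) := Nat.cast_nonneg j
  have hNq : (N:ℚ) ≠ 0 := by
    have : (0:ℚ) < N := by exact_mod_cast hN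
    positivity
  have hj2 : (j:ℚ) + 2 ≠ 0 := by positivity
  have h2m : 2*((j:ℚ)+2)-1 ≠ 0 := by intro h; nlinarith [h]
  have hNm : (N:ℚ) + ((j:ℚ)+2) ≠ 0 := by positivity
  simp only [coef, Cc, Dc, Bc, poch_zero, Nat.factorial_zero]
  push_cast
  field_simp
  ring

lemma coef_eq_zero (N m k : ℕ) (h : m < k) : coef N m k = 0 := by
  simp [coef, poch_neg_nat m k h]

lemma shmaliy_eq (m n N : ℕ) :
    shmaliy m n N = ∑ k ∈ Finset.range (m+1), coef N m k * poch ((n:ℚ)+1) k := by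
  rw [shmaliy, Finset.mul_sum]
  refine Finset.sum_congr rfl fun k _ => ?_
  simp only [coef]
  ring

lemma sum_extend (f : ℕ → ℚ) (a b : ℕ) (hab : a ≤ b) (hf : ∀ k, a ≤ k → f k = 0) :
    ∑ k ∈ Finset.range a, f k = ∑ k ∈ Finset.range b, f k :=
  Finset.sum_subset (Finset.range_subset_range.mpr hab)
    (fun x _ hxa => hf x (Nat.le_of_not_lt (by simpa using hxa)))

theorem shmaliy_recurrence (N : ℕ) (hN : 1 ≤ N) :
    (∀ n : ℕ, n ≤ N - 1 → shmaliy 0 n N = 1 / N) ∧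
    (∀ n : ℕ, n ≤ N - 1 → (1 : ℕ) ≤ N - 1 →
      shmaliy 1 n N =
        2 * ((1 : ℚ) ^ 2 * (2 * N - 1) - (4 * (1 : ℚ) ^ 2 - 1) * n) /
            ((1 : ℚ) * (2 * 1 - 1) * ((N : ℚ) + 1)) * shmaliy 0 n N -
          (2 * (1 : ℚ) + 1) * ((N : ℚ) - 1) / ((2 * (1 : ℚ) - 1) * ((N : ℚ) + 1)) * 0) ∧
    (∀ m n : ℕ, 2 ≤ m → m ≤ N - 1 → n ≤ N - 1 →
      shmaliy m n N =
        2 * ((m : ℚ) ^ 2 * (2 * N - 1) - (4 * (m : ℚ) ^ 2 - 1) * n) /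
            ((m : ℚ) * (2 * m - 1) * ((N : ℚ) + m)) * shmaliy (m - 1) n N -
          (2 * (m : ℚ) + 1) * ((N : ℚ) - m) / ((2 * (m : ℚ) - 1) * ((N : ℚ) + m)) *
            shmaliy (m - 2) n N) := by
  have hNq : (N:ℚ) ≠ 0 := by
    have : (0:ℚ) < N := by exact_mod_cast hN
    positivity
  have hN1 : (N:ℚ) + 1 ≠ 0 := by positivity
  refine ⟨?_, ?_, ?_⟩
  · intro n _
    simp [shmaliy, poch]
  · intro n _ _
    have h1 : shmaliy 1 n N = (4 / N) * (1 - ((n:ℚ)+1) * 3 / (2 * ((N:ℚ)+1))) := by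
      rw [shmaliy]
      rw [Finset.sum_range_succ, Finset.sum_range_one]
      simp only [poch_zero, poch_succ, Nat.factorial]
      push_cast
      field_simp
      ring
    have h0 : shmaliy 0 n N = 1 / N := by simp [shmaliy, poch]
    rw [h1, h0]
    field_simp
    ring
  · intro m n hm2 hmN hn
    have r1 : m - 1 + 1 = m := by omega
    have r2 : m - 2 + 1 = m - 1 := by omega
    rw [shmaliy_eq, shmaliy_eq, shmaliy_eq, r1, r2]
    have ext1 : ∑ k ∈ Finset.range m, coef N (m-1) k * poch ((n:ℚ)+1) k
        = ∑ k ∈ Finset.range (m+1), coef N (m-1) k * poch ((n:ℚ)+1) k :=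
      sum_extend _ m (m+1) (by omega)
        (fun k hk => by rw [coef_eq_zero _ _ _ (by omega), zero_mul])
    have ext2 : ∑ k ∈ Finset.range (m-1), coef N (m-2) k * poch ((n:ℚ)+1) k
        = ∑ k ∈ Finset.range (m+1), coef N (m-2) k * poch ((n:ℚ)+1) k :=
      sum_extend _ (m-1) (m+1) (by omega)
        (fun k hk => by rw [coef_eq_zero _ _ _ (by omega), zero_mul])
    rw [ext1, ext2]
    have hm0 : (m:ℚ) ≠ 0 := by
      have : (0:ℚ) < m := by exact_mod_cast (by omega : 0 < m)
      positivity
    have hm2q : (2:ℚ) ≤ (m:ℚ) := by exact_mod_cast hm2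
    have h2m1 : 2*(m:ℚ)-1 ≠ 0 := by intro h; nlinarith
    have hNmq : (N:ℚ) + (m:ℚ) ≠ 0 := by positivity
    have expand :
        2 * ((m : ℚ) ^ 2 * (2 * N - 1) - (4 * (m : ℚ) ^ 2 - 1) * n) /
              ((m : ℚ) * (2 * m - 1) * ((N : ℚ) + m)) *
            (∑ k ∈ Finset.range (m+1), coef N (m-1) k * poch ((n:ℚ)+1) k) -
          (2 * (m : ℚ) + 1) * ((N : ℚ) - m) / ((2 * (m : ℚ) - 1) * ((N : ℚ) + m)) *
            (∑ k ∈ Finset.range (m+1), coef N (m-2) k * poch ((n:ℚ)+1) k)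
        = (∑ k ∈ Finset.range (m+1),
            ((Cc N m - Dc N m * ((k:ℚ)+1)) * coef N (m-1) k - Bc N m * coef N (m-2) k)
              * poch ((n:ℚ)+1) k)
          + ∑ k ∈ Finset.range (m+1), (Dc N m * coef N (m-1) k) * poch ((n:ℚ)+1) (k+1) := by
      rw [Finset.mul_sum, Finset.mul_sum, ← Finset.sum_sub_distrib, ← Finset.sum_add_distrib]
      refine Finset.sum_congr rfl fun k _ => ?_
      rw [poch_succ]
      simp only [Cc, Dc, Bc]
      field_simp
      ring
    have drop : ∑ k ∈ Finset.range (m+1), (Dc N m * coef N (m-1) k) * poch ((n:ℚ)+1) (k+1)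
        = ∑ k ∈ Finset.range m, (Dc N m * coef N (m-1) k) * poch ((n:ℚ)+1) (k+1) :=
      (sum_extend _ m (m+1) (by omega)
        (fun k hk => by rw [coef_eq_zero _ _ _ (by omega), mul_zero, zero_mul])).symm
    rw [expand, drop]
    rw [Finset.sum_range_succ' (fun k => coef N m k * poch ((n:ℚ)+1) k) m,
      Finset.sum_range_succ'
        (fun k => ((Cc N m - Dc N m * ((k:ℚ)+1)) * coef N (m-1) k - Bc N m * coef N (m-2) k)
          * poch ((n:ℚ)+1) k) m]
    have hstep : ∀ x ∈ Finset.range m,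
        coef N m (x+1) * poch ((n:ℚ)+1) (x+1)
          = ((Cc N m - Dc N m * (((x+1:ℕ):ℚ)+1)) * coef N (m-1) (x+1)
              - Bc N m * coef N (m-2) (x+1)) * poch ((n:ℚ)+1) (x+1)
            + (Dc N m * coef N (m-1) x) * poch ((n:ℚ)+1) (x+1) := by
      intro x _
      have h := key_succ N m x hN hm2
      push_cast
      linear_combination poch ((n:ℚ)+1) (x+1) * h
    have h0 : coef N m 0 * poch ((n:ℚ)+1) 0
        = ((Cc N m - Dc N m * (((0:ℕ):ℚ)+1)) * coef N (m-1) 0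
            - Bc N m * coef N (m-2) 0) * poch ((n:ℚ)+1) 0 := by
      have h := key0 N m hN hm2
      simp only [poch_zero, mul_one, Nat.cast_zero, zero_add, mul_one]
      linear_combination h
    rw [Finset.sum_congr rfl hstep, h0, Finset.sum_add_distrib]
    ring
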